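/- arXiv:2511.09203 — 5 statements merged into one kernel-verified Lean document; each statement's English description precedes it below -/
import Mathlib

section
/- The gustave function from B⊥³ to the two-element lattice {⊥ ≤ ⊤}, defined by gustave(tt,ff,_) = ⊤, gustave(ff,_,tt) = ⊤, gustave(_,tt,ff) = ⊤, and ⊥ otherwise, is a stable function: for every x and every y ≤ gustave(x) there is a least x₀ ≤ x with y ≤ gustave(x₀). -/
/-- The flat domain of booleans with bottom. -/
inductive FB where
  | bot | tt | ff
  deriving DecidableEq

instance : PartialOrder FB where
  le a b := a = FB.bot ∨ a = b
  le_refl a := Or.inr rfl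
  le_trans a b c hab hbc := by rcases hab with h | h <;> rcases hbc with h' | h' <;> simp_all
  le_antisymm a b hab hba := by rcases hab with h | h <;> rcases hba with h' | h' <;> simp_all

/-- Conditionally multiplicative monotone function. -/
def CondMult {X Y : Type*} [PartialOrder X] [PartialOrder Y] (f : X → Y) : Prop :=
  Monotone f ∧
    ∀ z x x' m : X, x ≤ z → x' ≤ z → IsGLB {x, x'} m → IsGLB {f x, f x'} (f m)

/-- Stable function. -/
def Stable {X Y : Type*} [PartialOrder X] [PartialOrder Y] (f : X → Y) : Prop :=
  Monotone f ∧
    ∀ x y, y ≤ f x → ∃ x₀, x₀ ≤ x ∧ y ≤ f x₀ ∧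
      ∀ x₀', x₀' ≤ x → y ≤ f x₀' → x₀ ≤ x₀'

/-- The gustave function into the two-element lattice (Bool with false ≤ true). -/
def gustave : FB × FB × FB → Bool
  | (FB.tt, FB.ff, _) => true
  | (FB.ff, _, FB.tt) => true
  | (_, FB.tt, FB.ff) => true
  | _ => false


instance : Fintype FB := ⟨⟨{FB.bot, FB.tt, FB.ff}, by decide⟩, fun x => by cases x <;> decide⟩

instance : DecidableRel (α := FB) (· ≤ ·) :=
  fun a b => decidable_of_iff (a = FB.bot ∨ a = b) Iff.rfl

instance : DecidableRel (α := FB × FB × FB) (· ≤ ·) :=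
  fun a b => decidable_of_iff (a.1 ≤ b.1 ∧ a.2.1 ≤ b.2.1 ∧ a.2.2 ≤ b.2.2)
    ⟨fun h => ⟨h.1, h.2.1, h.2.2⟩, fun h => ⟨h.1, h.2.1, h.2.2⟩⟩

/-- gustave is stable. -/
theorem gustave_stable : Stable gustave := by
  constructor
  · decide
  · decide
end

section
/- The function unstable : D → {⊥ ≤ ⊤}, where D = {⊥} ∪ ℕ with ⊥ least and the natural numbers ordered so that ⋯ ≤ n+1 ≤ n ≤ ⋯ ≤ 1 ≤ 0, given by unstable(⊥) = ⊥ and unstable(n) = ⊤, is monotone and conditionally multiplicative but not stable. -/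
/-- The poset D = {⊥} ∪ ℕ with ⊥ least and naturals in reverse order
(⋯ ≤ n+1 ≤ n ≤ ⋯ ≤ 1 ≤ 0). -/
abbrev D := WithBot (OrderDual ℕ)

/-- unstable(⊥) = ⊥ and unstable(n) = ⊤ in the two-element lattice Bool. -/
noncomputable def unstable : D → Bool := fun x => if x = ⊥ then false else true

/-- unstable is monotone and conditionally multiplicative but not stable. -/
theorem unstable_monotone_condMult_not_stable :
    Monotone unstable ∧ CondMult unstable ∧ ¬ Stable unstable := by
  have hval : ∀ x : D, x ≠ ⊥ → unstable x = true := by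
    intro x hx; simp [unstable, hx]
  have hmono : Monotone unstable := by
    intro a b hab
    rcases eq_or_ne a ⊥ with rfl | ha
    · simp [unstable]
    · have hb : b ≠ ⊥ := fun h => ha (le_bot_iff.mp (h ▸ hab))
      simp [unstable, ha, hb]
  refine ⟨hmono, ⟨hmono, ?_⟩, ?_⟩
  · intro z x x' m hx hx' hglb
    rcases eq_or_ne m ⊥ with rfl | hm
    · -- one of x, x' must be ⊥
      have hone : x = ⊥ ∨ x' = ⊥ := by
        by_contra h
        push_neg at h
        obtain ⟨a, rfl⟩ := Option.ne_none_iff_exists'.mp h.1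
        obtain ⟨a', rfl⟩ := Option.ne_none_iff_exists'.mp h.2
        have : ((a ⊓ a' : ℕᵒᵈ) : D) ≤ ⊥ := by
          apply hglb.2
          intro b hb
          rcases hb with rfl | rfl
          · exact WithBot.coe_le_coe.mpr inf_le_left
          · exact WithBot.coe_le_coe.mpr inf_le_right
        simp at this
      have hfalse : unstable x = false ∨ unstable x' = false := by
        rcases hone with rfl | rfl
        · left; simp [unstable]
        · right; simp [unstable]
      constructor
      · intro b hb
        rcases hb with rfl | hb
        · exact hmono bot_le
        · simp at hb; subst hb; exact hmono bot_le
      · intro b hb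
        have : unstable (⊥ : D) = false := by simp [unstable]
        rw [this]
        rcases hfalse with h | h
        · have := hb (Set.mem_insert _ _); rw [h] at this; exact this
        · have := hb (Set.mem_insert_of_mem _ rfl); rw [h] at this; exact this
    · have hmx : m ≤ x := hglb.1 (Set.mem_insert _ _)
      have hmx' : m ≤ x' := hglb.1 (Set.mem_insert_of_mem _ rfl)
      have h1 : unstable x = true := hval x (fun h => hm (le_bot_iff.mp (h ▸ hmx)))
      have h2 : unstable x' = true := hval x' (fun h => hm (le_bot_iff.mp (h ▸ hmx')))
      rw [hval m hm, h1, h2]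
      exact ⟨fun b hb => by rcases hb with rfl | hb <;> simp_all, fun b hb => Bool.le_true b⟩
  · rintro ⟨-, h⟩
    obtain ⟨x₀, hle, hy, hleast⟩ := h ((OrderDual.toDual 0 : ℕᵒᵈ) : D) true
      (by rw [hval _ (by simp)])
    have hx₀ : x₀ ≠ ⊥ := by
      intro hb
      rw [hb] at hy
      simp [unstable] at hy
      exact (by decide : ¬ (true ≤ false)) hy
    obtain ⟨k, rfl⟩ := Option.ne_none_iff_exists'.mp hx₀
    have := hleast ((OrderDual.toDual (OrderDual.ofDual k + 1) : ℕᵒᵈ) : D)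
      (WithBot.coe_le_coe.mpr (OrderDual.toDual_le_toDual.mpr (Nat.zero_le _)))
      (by rw [hval _ (by simp)])
    have h2 := OrderDual.le_toDual.mp (WithBot.coe_le_coe.mp this)
    omega
end

section
/- A monotone function f : X → Y between posets is stable if and only if for every x ∈ X, the restriction f_x : ↓x → ↓f(x) has a left (Galois) adjoint, i.e. there exists monotone f*_x : ↓f(x) → ↓x with f*_x(y) ≤ x' ⟺ y ≤ f(x') for all x' ≤ x and y ≤ f(x). -/
/-- A monotone f is stable iff each restriction ↓x → ↓f(x) has a left Galois
adjoint. -/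
theorem stable_iff_left_adjoint {X Y : Type*} [PartialOrder X] [PartialOrder Y]
    (f : X → Y) (hf : Monotone f) :
    Stable f ↔
      ∀ x : X, ∃ g : {y : Y // y ≤ f x} → {x' : X // x' ≤ x},
        Monotone g ∧
          ∀ (y : {y : Y // y ≤ f x}) (x' : {x' : X // x' ≤ x}),
            g y ≤ x' ↔ (y : Y) ≤ f (x' : X) := by
  constructor
  · rintro ⟨-, hst⟩ x
    choose x₀ h1 h2 h3 using fun (y : {y : Y // y ≤ f x}) => hst x y.1 y.2
    refine ⟨fun y => ⟨x₀ y, h1 y⟩, ?_, ?_⟩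
    · intro y y' hyy'
      exact h3 y (x₀ y') (h1 y') (le_trans hyy' (h2 y'))
    · intro y x'
      constructor
      · intro h; exact le_trans (h2 y) (hf h)
      · intro h; exact h3 y x'.1 x'.2 h
  · intro hg
    refine ⟨hf, fun x y hy => ?_⟩
    obtain ⟨g, -, hadj⟩ := hg x
    refine ⟨(g ⟨y, hy⟩).1, (g ⟨y, hy⟩).2, ?_, ?_⟩
    · exact (hadj ⟨y, hy⟩ (g ⟨y, hy⟩)).mp le_rfl
    · intro x' hx' hyx'
      exact (hadj ⟨y, hy⟩ ⟨x', hx'⟩).mpr hyx'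
end

section
/- On the poset of pointed intervals {[l,x,u] : l ≤ x ≤ u, reals}, ordered by [l₁,x₁,u₁] ≤ [l₂,x₂,u₂] iff x₁ = x₂, l₁ ≤ l₂ and u₂ ≤ u₁, the addition [l₁,x₁,u₁] + [l₂,x₂,u₂] = [(l₁+x₂) ⊓ (l₂+x₁), x₁+x₂, (u₁+x₂) ⊔ (u₂+x₁)] is a monotone function of two arguments that is conditionally multiplicative. -/
/-- Pointed intervals: [l,x,u] with l ≤ x ≤ u. -/
structure PInt where
  l : ℝ
  x : ℝ
  u : ℝ
  hl : l ≤ x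
  hu : x ≤ u

/-- [l₁,x₁,u₁] ≤ [l₂,x₂,u₂] iff x₁ = x₂, l₁ ≤ l₂ and u₂ ≤ u₁. -/
instance : PartialOrder PInt where
  le a b := a.x = b.x ∧ a.l ≤ b.l ∧ b.u ≤ a.u
  le_refl a := ⟨rfl, le_rfl, le_rfl⟩
  le_trans a b c h h' := ⟨h.1.trans h'.1, h.2.1.trans h'.2.1, h'.2.2.trans h.2.2⟩
  le_antisymm a b h h' := by
    cases a; cases b
    simp only [PInt.mk.injEq]
    exact ⟨le_antisymm h.2.1 h'.2.1, h.1, le_antisymm h'.2.2 h.2.2⟩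

/-- Addition of pointed intervals. -/
def padd (a b : PInt) : PInt where
  l := min (a.l + b.x) (b.l + a.x)
  x := a.x + b.x
  u := max (a.u + b.x) (b.u + a.x)
  hl := le_trans (min_le_left _ _) (by have := a.hl; linarith)
  hu := le_trans (by have := a.hu; linarith) (le_max_left _ _)

lemma PInt.le_def {a b : PInt} : a ≤ b ↔ a.x = b.x ∧ a.l ≤ b.l ∧ b.u ≤ a.u := Iff.rfl

/-- Meet of two pointed intervals with the same point. -/
def pmeet (a b : PInt) (h : a.x = b.x) : PInt where
  l := min a.l b.l
  x := a.x
  u := max a.u b.u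
  hl := (min_le_left _ _).trans a.hl
  hu := le_max_of_le_left a.hu

lemma pmeet_isGLB (a b : PInt) (h : a.x = b.x) : IsGLB {a, b} (pmeet a b h) := by
  constructor
  · rintro c (rfl | rfl)
    · exact ⟨rfl, min_le_left _ _, le_max_left _ _⟩
    · exact ⟨h, min_le_right _ _, le_max_right _ _⟩
  · intro c hc
    have h1 := hc (Set.mem_insert _ _)
    have h2 := hc (Set.mem_insert_of_mem _ rfl)
    exact ⟨h1.1, le_min h1.2.1 h2.2.1, max_le h1.2.2 h2.2.2⟩

lemma padd_mono : Monotone (fun p : PInt × PInt => padd p.1 p.2) := by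
  rintro ⟨a, b⟩ ⟨a', b'⟩ ⟨⟨hx1, hl1, hu1⟩, ⟨hx2, hl2, hu2⟩⟩
  refine ⟨by simp only [padd]; rw [hx1, hx2], ?_, ?_⟩
  · exact le_min (le_trans (min_le_left _ _) (by dsimp [padd]; rw [hx2]; linarith))
      (le_trans (min_le_right _ _) (by dsimp [padd]; rw [hx1]; linarith))
  · exact max_le (le_trans (by dsimp [padd]; rw [hx2]; linarith) (le_max_left _ _))
      (le_trans (by dsimp [padd]; rw [hx1]; linarith) (le_max_right _ _))

/-- Addition of pointed intervals, as a function of two arguments on the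
componentwise-ordered product, is monotone and conditionally multiplicative. -/
theorem padd_condMult : CondMult (fun p : PInt × PInt => padd p.1 p.2) := by
  refine ⟨padd_mono, ?_⟩
  rintro z ⟨a, b⟩ ⟨a', b'⟩ m hpz hp'z hm
  obtain ⟨⟨hx1, -, -⟩, ⟨hx2, -, -⟩⟩ := hpz
  obtain ⟨⟨hx1', -, -⟩, ⟨hx2', -, -⟩⟩ := hp'z
  have ha : a.x = a'.x := hx1.trans hx1'.symm
  have hb : b.x = b'.x := hx2.trans hx2'.symm
  have hmeq : m = (pmeet a a' ha, pmeet b b' hb) := by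
    refine hm.unique ?_
    constructor
    · rintro c (rfl | rfl)
      · exact ⟨(pmeet_isGLB a a' ha).1 (Set.mem_insert _ _),
          (pmeet_isGLB b b' hb).1 (Set.mem_insert _ _)⟩
      · exact ⟨(pmeet_isGLB a a' ha).1 (Set.mem_insert_of_mem _ rfl),
          (pmeet_isGLB b b' hb).1 (Set.mem_insert_of_mem _ rfl)⟩
    · intro c hc
      have h1 := hc (Set.mem_insert _ _)
      have h2 := hc (Set.mem_insert_of_mem _ rfl)
      exact ⟨(pmeet_isGLB a a' ha).2 (by rintro d (rfl | rfl); exacts [h1.1, h2.1]),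
        (pmeet_isGLB b b' hb).2 (by rintro d (rfl | rfl); exacts [h1.2, h2.2])⟩
  subst hmeq
  dsimp only
  have hxm : (padd (pmeet a a' ha) (pmeet b b' hb)).x = (padd a b).x := rfl
  have hxm' : (padd (pmeet a a' ha) (pmeet b b' hb)).x = (padd a' b').x := by
    dsimp [padd, pmeet]; rw [ha, hb]
  -- key arithmetic facts
  have hlm : (padd (pmeet a a' ha) (pmeet b b' hb)).l
      = min (padd a b).l (padd a' b').l := by
    dsimp [padd, pmeet]
    rw [← ha, ← hb, min_min_min_comm, min_add_add_right, min_add_add_right]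
  have hum : (padd (pmeet a a' ha) (pmeet b b' hb)).u
      = max (padd a b).u (padd a' b').u := by
    dsimp [padd, pmeet]
    rw [← ha, ← hb, max_max_max_comm, max_add_add_right, max_add_add_right]
  constructor
  · rintro c (rfl | rfl)
    · exact ⟨hxm, by rw [hlm]; exact min_le_left _ _, by rw [hum]; exact le_max_left _ _⟩
    · exact ⟨hxm', by rw [hlm]; exact min_le_right _ _, by rw [hum]; exact le_max_right _ _⟩
  · intro c hc
    have h1 := hc (Set.mem_insert _ _)
    have h2 := hc (Set.mem_insert_of_mem _ rfl)
    exact ⟨h1.1.trans hxm.symm, by rw [hlm]; exact le_min h1.2.1 h2.2.1,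
      by rw [hum]; exact max_le h1.2.2 h2.2.2⟩
end

section
/- Interval addition on pointed intervals is stable: given inputs [l₁,x₁,u₁], [l₂,x₂,u₂] and an approximation [l, x₁+x₂, u] of the output (with l ≤ x₁+x₂ ≤ u), the pair ([l−x₂, x₁, u−x₂], [l−x₁, x₂, u−x₁]) is the least approximation of the input pair whose sum dominates [l, x₁+x₂, u]. -/
/-- Interval addition is stable: ([l−x₂,x₁,u−x₂],[l−x₁,x₂,u−x₁]) is the least
approximation of the input pair whose sum dominates the output
approximation [l,x₁+x₂,u]. -/
theorem padd_stable (a b : PInt) (l u : ℝ)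
    (hl : l ≤ a.x + b.x) (hu : a.x + b.x ≤ u)
    (happrox : (⟨l, a.x + b.x, u, hl, hu⟩ : PInt) ≤ padd a b) :
    (⟨l - b.x, a.x, u - b.x, by linarith, by linarith⟩ : PInt) ≤ a ∧
    (⟨l - a.x, b.x, u - a.x, by linarith, by linarith⟩ : PInt) ≤ b ∧
    (⟨l, a.x + b.x, u, hl, hu⟩ : PInt) ≤
      padd ⟨l - b.x, a.x, u - b.x, by linarith, by linarith⟩
           ⟨l - a.x, b.x, u - a.x, by linarith, by linarith⟩ ∧
    ∀ q₁ q₂ : PInt, q₁ ≤ a → q₂ ≤ b →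
      (⟨l, a.x + b.x, u, hl, hu⟩ : PInt) ≤ padd q₁ q₂ →
      (⟨l - b.x, a.x, u - b.x, by linarith, by linarith⟩ : PInt) ≤ q₁ ∧
      (⟨l - a.x, b.x, u - a.x, by linarith, by linarith⟩ : PInt) ≤ q₂ := by
  obtain ⟨-, h1, h2⟩ := happrox
  simp only [padd, le_min_iff] at h1
  simp only [padd, max_le_iff] at h2
  refine ⟨⟨rfl, ?_, ?_⟩, ⟨rfl, ?_, ?_⟩, ⟨rfl, ?_, ?_⟩, ?_⟩
  · show l - b.x ≤ a.l; linarith [h1.1]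
  · show a.u ≤ u - b.x; linarith [h2.1]
  · show l - a.x ≤ b.l; linarith [h1.2]
  · show b.u ≤ u - a.x; linarith [h2.2]
  · simp [padd]
  · simp [padd]
  · rintro q₁ q₂ ⟨hx1, -, -⟩ ⟨hx2, -, -⟩ ⟨-, hq1, hq2⟩
    simp only [padd, le_min_iff] at hq1
    simp only [padd, max_le_iff] at hq2
    rw [hx1] at hq1 hq2
    rw [hx2] at hq1 hq2
    refine ⟨⟨hx1.symm, ?_, ?_⟩, ⟨hx2.symm, ?_, ?_⟩⟩
    · show l - b.x ≤ q₁.l; linarith [hq1.1]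
    · show q₁.u ≤ u - b.x; linarith [hq2.1]
    · show l - a.x ≤ q₂.l; linarith [hq1.2]
    · show q₂.u ≤ u - a.x; linarith [hq2.2]
end
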